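/- arXiv:2605.30618 — 2 statements merged into one kernel-verified Lean document; each statement's English description precedes it below -/
import Mathlib

section
/- Over strict timed HT-traces, for all n ≥ 0 and all metric formulas φ, ψ, the unfolding equivalence for metric release holds: M,k ⊨ φ R_{[0,n]} ψ iff M,k ⊨ ψ ∧ (φ ∨ ⋀_{x=1}^{n} ◯̂_{[x,x]}(φ R_{[0,n−x]} ψ)). -/
open scoped Classical ENat

/-- Interval `[a, b]` with `a : ℕ` and `b : ℕ∞` (possibly `ω = ⊤`). -/
abbrev Ivl : Type := ℕ × ℕ∞

/-- Membership `x ∈ [a, b]`. -/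
def memI (I : Ivl) (x : ℕ) : Prop := I.1 ≤ x ∧ (x : ℕ∞) ≤ I.2

/-- Metric temporal formulas over alphabet `A`.  Non-metric operators are the
metric ones with interval `(0, ⊤)`, i.e. `[0, ω]`. -/
inductive MF (A : Type) : Type
  | bot
  | atom (a : A)
  | and (φ ψ : MF A)
  | or (φ ψ : MF A)
  | imp (φ ψ : MF A)
  | prev (I : Ivl) (φ : MF A)      -- ●_I
  | wprev (I : Ivl) (φ : MF A)     -- ●̂_I (weak previous)
  | next (I : Ivl) (φ : MF A)      -- ○_I
  | wnext (I : Ivl) (φ : MF A)     -- ◯̂_I (weak next)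
  | since (I : Ivl) (φ ψ : MF A)   -- φ S_I ψ
  | trigger (I : Ivl) (φ ψ : MF A) -- φ T_I ψ
  | until_ (I : Ivl) (φ ψ : MF A)  -- φ U_I ψ
  | release (I : Ivl) (φ ψ : MF A) -- φ R_I ψ

namespace MF
def top {A : Type} : MF A := imp bot bot
def neg {A : Type} (φ : MF A) : MF A := imp φ bot
/-- `□ φ := ⊥ R_{[0,ω]} φ`. -/
def always {A : Type} (φ : MF A) : MF A := release (0, ⊤) bot φ
/-- `◇ φ := ⊤ U_{[0,ω]} φ`. -/
def evtl {A : Type} (φ : MF A) : MF A := until_ (0, ⊤) top φ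
/-- `F := ¬ ○_{[0,ω]} ⊤` (final). -/
def final {A : Type} : MF A := neg (next (0, ⊤) top)
/-- `I := ¬ ●_{[0,ω]} ⊤` (initial). -/
def initial {A : Type} : MF A := neg (prev (0, ⊤) top)
end MF

/-- Timed HT-trace of length `lam ∈ ℕ ∪ {ω}` over alphabet `A`. -/
structure TimedTrace (A : Type) where
  lam : ℕ∞
  H : ℕ → Set A
  T : ℕ → Set A
  tau : ℕ → ℕ
  sub : ∀ i : ℕ, (i : ℕ∞) < lam → H i ⊆ T i
  mono : ∀ i : ℕ, ((i + 1 : ℕ) : ℕ∞) < lam → tau i ≤ tau (i + 1)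
  zero : tau 0 = 0

/-- Strictness: `τ(i) < τ(i+1)` for all consecutive indices in the domain. -/
def TimedTrace.strict {A : Type} (M : TimedTrace A) : Prop :=
  ∀ i : ℕ, ((i + 1 : ℕ) : ℕ∞) < M.lam → M.tau i < M.tau (i + 1)

/-- The total trace `(T, T)` associated with `(H, T)`. -/
def TimedTrace.tot {A : Type} (M : TimedTrace A) : TimedTrace A :=
  { M with H := M.T, sub := fun _ _ => subset_rfl }

/-- MHT satisfaction `M, k ⊨ φ`. -/
def sat {A : Type} : TimedTrace A → ℕ → MF A → Prop
  | _, _, .bot => False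
  | M, k, .atom a => a ∈ M.H k
  | M, k, .and φ ψ => sat M k φ ∧ sat M k ψ
  | M, k, .or φ ψ => sat M k φ ∨ sat M k ψ
  | M, k, .imp φ ψ =>
      (sat M k φ → sat M k ψ) ∧ (sat M.tot k φ → sat M.tot k ψ)
  | M, k, .prev I φ =>
      0 < k ∧ sat M (k - 1) φ ∧ memI I (M.tau k - M.tau (k - 1))
  | M, k, .wprev I φ =>
      k = 0 ∨ sat M (k - 1) φ ∨ ¬ memI I (M.tau k - M.tau (k - 1))
  | M, k, .next I φ =>
      ((k + 1 : ℕ) : ℕ∞) < M.lam ∧ sat M (k + 1) φ ∧ memI I (M.tau (k + 1) - M.tau k)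
  | M, k, .wnext I φ =>
      ((k + 1 : ℕ) : ℕ∞) = M.lam ∨ sat M (k + 1) φ ∨ ¬ memI I (M.tau (k + 1) - M.tau k)
  | M, k, .since I φ ψ =>
      ∃ j : ℕ, j ≤ k ∧ memI I (M.tau k - M.tau j) ∧ sat M j ψ ∧
        ∀ i : ℕ, j < i → i ≤ k → sat M i φ
  | M, k, .trigger I φ ψ =>
      ∀ j : ℕ, j ≤ k → memI I (M.tau k - M.tau j) →
        sat M j ψ ∨ ∃ i : ℕ, j < i ∧ i ≤ k ∧ sat M i φ
  | M, k, .until_ I φ ψ =>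
      ∃ j : ℕ, k ≤ j ∧ ((j : ℕ) : ℕ∞) < M.lam ∧ memI I (M.tau j - M.tau k) ∧ sat M j ψ ∧
        ∀ i : ℕ, k ≤ i → i < j → sat M i φ
  | M, k, .release I φ ψ =>
      ∀ j : ℕ, k ≤ j → ((j : ℕ) : ℕ∞) < M.lam → memI I (M.tau j - M.tau k) →
        sat M j ψ ∨ ∃ i : ℕ, k ≤ i ∧ i < j ∧ sat M i φ

/-- The three-valued (Gödel) valuation associated with a timed HT-trace:
`0` (false), `1` (true there only), `2` (true here).  `sSup ∅ = 0` in `ℕ`, and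
the `insert 2` realizes `inf ∅ = 2` (all values are `≤ 2`). -/
noncomputable def mval {A : Type} (M : TimedTrace A) : MF A → ℕ → ℕ
  | .bot, _ => 0
  | .atom a, k => if a ∈ M.H k then 2 else if a ∈ M.T k then 1 else 0
  | .and φ ψ, k => min (mval M φ k) (mval M ψ k)
  | .or φ ψ, k => max (mval M φ k) (mval M ψ k)
  | .imp φ ψ, k => if mval M φ k ≤ mval M ψ k then 2 else mval M ψ k
  | .prev I φ, k =>
      if 0 < k ∧ memI I (M.tau k - M.tau (k - 1)) then mval M φ (k - 1) else 0
  | .wprev I φ, k =>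
      if k = 0 ∨ ¬ memI I (M.tau k - M.tau (k - 1)) then 2 else mval M φ (k - 1)
  | .next I φ, k =>
      if ((k + 1 : ℕ) : ℕ∞) < M.lam ∧ memI I (M.tau (k + 1) - M.tau k) then
        mval M φ (k + 1) else 0
  | .wnext I φ, k =>
      if ((k + 1 : ℕ) : ℕ∞) = M.lam ∨ ¬ memI I (M.tau (k + 1) - M.tau k) then 2
      else mval M φ (k + 1)
  | .since I φ ψ, k =>
      sSup {v : ℕ | ∃ j : ℕ, j ≤ k ∧ memI I (M.tau k - M.tau j) ∧
        v = min (mval M ψ j)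
          (sInf (insert 2 {w : ℕ | ∃ i : ℕ, j < i ∧ i ≤ k ∧ w = mval M φ i}))}
  | .trigger I φ ψ, k =>
      sInf (insert 2 {v : ℕ | ∃ j : ℕ, j ≤ k ∧ memI I (M.tau k - M.tau j) ∧
        v = max (mval M ψ j)
          (sSup {w : ℕ | ∃ i : ℕ, j < i ∧ i ≤ k ∧ w = mval M φ i})})
  | .until_ I φ ψ, k =>
      sSup {v : ℕ | ∃ j : ℕ, k ≤ j ∧ ((j : ℕ) : ℕ∞) < M.lam ∧
        memI I (M.tau j - M.tau k) ∧
        v = min (mval M ψ j)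
          (sInf (insert 2 {w : ℕ | ∃ i : ℕ, k ≤ i ∧ i < j ∧ w = mval M φ i}))}
  | .release I φ ψ, k =>
      sInf (insert 2 {v : ℕ | ∃ j : ℕ, k ≤ j ∧ ((j : ℕ) : ℕ∞) < M.lam ∧
        memI I (M.tau j - M.tau k) ∧
        v = max (mval M ψ j)
          (sSup {w : ℕ | ∃ i : ℕ, k ≤ i ∧ i < j ∧ w = mval M φ i})})

/-- Finite disjunction `⋁`, with empty disjunction `⊥`. -/
def bigOr {A : Type} : List (MF A) → MF A
  | [] => MF.bot
  | χ :: l => MF.or χ (bigOr l)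

/-- Finite conjunction `⋀`, with empty conjunction `⊤`. -/
def bigAnd {A : Type} : List (MF A) → MF A
  | [] => MF.top
  | χ :: l => MF.and χ (bigAnd l)

lemma sat_top {A : Type} (M : TimedTrace A) (k : ℕ) : sat M k MF.top := by
  simp [MF.top, sat]

lemma sat_bigAnd {A : Type} (M : TimedTrace A) (k : ℕ) (l : List (MF A)) :
    sat M k (bigAnd l) ↔ ∀ χ ∈ l, sat M k χ := by
  induction l with
  | nil => simpa [bigAnd] using sat_top M k
  | cons χ l ih => simp [bigAnd, sat, ih]

lemma memI_zero {n m : ℕ} : memI (0, (n : ℕ∞)) m ↔ m ≤ n := by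
  simp [memI, Nat.cast_le]

lemma memI_pt {x m : ℕ} : memI (x, (x : ℕ∞)) m ↔ m = x := by
  simp [memI, Nat.cast_le]; omega

lemma tau_mono {A : Type} (M : TimedTrace A) :
    ∀ j k : ℕ, k ≤ j → ((j : ℕ) : ℕ∞) < M.lam → M.tau k ≤ M.tau j := by
  intro j
  induction j with
  | zero => intro k hk _; interval_cases k; rfl
  | succ j ih =>
    intro k hk hlam
    rcases Nat.eq_or_lt_of_le hk with h | h
    · exact h ▸ le_rfl
    · have hj : ((j : ℕ) : ℕ∞) < M.lam :=
        lt_of_le_of_lt (by exact_mod_cast Nat.le_succ j) hlam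
      exact le_trans (ih k (Nat.lt_succ_iff.mp h) hj) (M.mono j hlam)

/-- over strict traces,
`φ R_{[0,n]} ψ  ≡  ψ ∧ (φ ∨ ⋀_{x=1}^{n} ◯̂_{[x,x]} (φ R_{[0,n−x]} ψ))`. -/
theorem release_unfolding {A : Type} (M : TimedTrace A) (hstrict : M.strict)
    (n : ℕ) (φ ψ : MF A) (k : ℕ) (hk : (k : ℕ∞) < M.lam) :
    sat M k (MF.release (0, (n : ℕ∞)) φ ψ) ↔
    sat M k (MF.and ψ (MF.or φ (bigAnd ((List.range n).map (fun i =>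
      MF.wnext (i + 1, ((i + 1 : ℕ) : ℕ∞))
        (MF.release (0, ((n - (i + 1) : ℕ) : ℕ∞)) φ ψ)))))) := by
  constructor
  · intro H
    have hψk : sat M k ψ := by
      rcases H k le_rfl hk (by simp [memI_zero]) with h | ⟨i, hi1, hi2, _⟩
      · exact h
      · omega
    refine ⟨hψk, ?_⟩
    by_cases hφk : sat M k φ
    · exact Or.inl hφk
    · right
      rw [sat_bigAnd]
      intro χ hχ
      simp only [List.mem_map, List.mem_range] at hχ
      obtain ⟨i, hi, rfl⟩ := hχ
      simp only [sat]
      by_cases hlam : ((k + 1 : ℕ) : ℕ∞) = M.lam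
      · exact Or.inl hlam
      have hk1 : ((k + 1 : ℕ) : ℕ∞) < M.lam := by
        refine lt_of_le_of_ne ?_ hlam
        have := Order.add_one_le_of_lt hk
        push_cast
        exact this
      by_cases hx : memI (i + 1, ((i + 1 : ℕ) : ℕ∞)) (M.tau (k + 1) - M.tau k)
      · right; left
        have hxeq : M.tau (k + 1) - M.tau k = i + 1 := memI_pt.mp hx
        intro j hj hjlam hmem
        have hτk1 : M.tau k ≤ M.tau (k + 1) := tau_mono M (k + 1) k (Nat.le_succ k) hk1
        have hτj : M.tau (k + 1) ≤ M.tau j := tau_mono M j (k + 1) hj hjlam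
        rw [memI_zero] at hmem
        have hmem' : M.tau j - M.tau k ≤ n := by omega
        rcases H j (by omega) hjlam (memI_zero.mpr hmem') with h | ⟨i', hi'1, hi'2, hφ⟩
        · exact Or.inl h
        · right
          refine ⟨i', ?_, hi'2, hφ⟩
          rcases Nat.eq_or_lt_of_le hi'1 with h | h
          · exact absurd (h ▸ hφ) hφk
          · exact h
      · exact Or.inr (Or.inr hx)
  · rintro ⟨hψk, hrest⟩
    intro j hj hjlam hmem
    rcases Nat.eq_or_lt_of_le hj with rfl | hlt
    · exact Or.inl hψk
    rcases hrest with hφk | hconj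
    · exact Or.inr ⟨k, le_rfl, hlt, hφk⟩
    rw [sat_bigAnd] at hconj
    have hk1lam : ((k + 1 : ℕ) : ℕ∞) < M.lam :=
      lt_of_le_of_lt (by exact_mod_cast hlt) hjlam
    have hτkk1 : M.tau k < M.tau (k + 1) := hstrict k hk1lam
    have hτj : M.tau (k + 1) ≤ M.tau j := tau_mono M j (k + 1) hlt hjlam
    rw [memI_zero] at hmem
    set x := M.tau (k + 1) - M.tau k with hxdef
    have hx1 : 1 ≤ x := by omega
    have hxn : x ≤ n := by omega
    have hw := hconj (MF.wnext (x - 1 + 1, ((x - 1 + 1 : ℕ) : ℕ∞))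
        (MF.release (0, ((n - (x - 1 + 1) : ℕ) : ℕ∞)) φ ψ)) (by
      simp only [List.mem_map, List.mem_range]
      exact ⟨x - 1, by omega, rfl⟩)
    simp only [sat] at hw
    rcases hw with hw | hw | hw
    · exact absurd hw (ne_of_lt hk1lam)
    · have hrel := hw j hlt hjlam (memI_zero.mpr (by omega))
      rcases hrel with h | ⟨i', hi'1, hi'2, hφ⟩
      · exact Or.inl h
      · exact Or.inr ⟨i', by omega, hi'2, hφ⟩
    · exact absurd (memI_pt.mpr (by omega)) hw
end

section
/- In the three-valued semantics over strict timed traces, metric until satisfies the recursive valuation identity: m(k, φ U_{[0,n]} ψ) = max{ m(k,ψ), min{ m(k,φ), max over x ∈ [1,n] of m(k, ○_{[x,x]}(φ U_{[0,n−x]} ψ)) } } for all k < λ and all n ≥ 0, where the empty max (n = 0) is 0. -/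
open scoped Classical ENat

section Aux

variable {A : Type}

lemma mval_le_two (M : TimedTrace A) (φ : MF A) : ∀ k : ℕ, mval M φ k ≤ 2 := by
  induction φ with
  | bot => intro k; simp [mval]
  | atom a => intro k; simp only [mval]; split_ifs <;> omega
  | and φ ψ ih1 ih2 => intro k; exact le_trans (min_le_left _ _) (ih1 k)
  | or φ ψ ih1 ih2 => intro k; exact max_le (ih1 k) (ih2 k)
  | imp φ ψ ih1 ih2 =>
    intro k
    simp only [mval]
    split_ifs
    · exact le_refl _
    · exact ih2 k
  | prev I φ ih =>
    intro k
    simp only [mval]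
    split_ifs
    · exact ih _
    · omega
  | wprev I φ ih =>
    intro k
    simp only [mval]
    split_ifs
    · exact le_refl _
    · exact ih _
  | next I φ ih =>
    intro k
    simp only [mval]
    split_ifs
    · exact ih _
    · omega
  | wnext I φ ih =>
    intro k
    simp only [mval]
    split_ifs
    · exact le_refl _
    · exact ih _
  | since I φ ψ ih1 ih2 =>
    intro k
    refine csSup_le' ?_
    rintro v ⟨j, _, _, rfl⟩
    exact le_trans (min_le_left _ _) (ih2 j)
  | trigger I φ ψ ih1 ih2 =>
    intro k
    exact csInf_le (OrderBot.bddBelow _) (Set.mem_insert _ _)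
  | until_ I φ ψ ih1 ih2 =>
    intro k
    refine csSup_le' ?_
    rintro v ⟨j, _, _, _, rfl⟩
    exact le_trans (min_le_left _ _) (ih2 j)
  | release I φ ψ ih1 ih2 =>
    intro k
    exact csInf_le (OrderBot.bddBelow _) (Set.mem_insert _ _)

lemma tau_mono_le (M : TimedTrace A) {i j : ℕ} (hij : i ≤ j) (hj : (j : ℕ∞) < M.lam) :
    M.tau i ≤ M.tau j := by
  induction j with
  | zero => obtain rfl : i = 0 := Nat.le_zero.mp hij; exact le_refl _
  | succ j ih =>
    rcases eq_or_lt_of_le hij with rfl | h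
    · exact le_refl _
    · have hjlam : (j : ℕ∞) < M.lam := by
        refine lt_trans ?_ hj
        exact_mod_cast Nat.lt_succ_self j
      exact le_trans (ih (Nat.lt_succ_iff.mp h) hjlam) (M.mono j hj)

/-- The set whose supremum gives the until valuation. -/
def Uset (M : TimedTrace A) (φ ψ : MF A) (N : ℕ∞) (k : ℕ) : Set ℕ :=
  {v : ℕ | ∃ j : ℕ, k ≤ j ∧ ((j : ℕ) : ℕ∞) < M.lam ∧ memI (0, N) (M.tau j - M.tau k) ∧
    v = min (mval M ψ j)
      (sInf (insert 2 {w : ℕ | ∃ i : ℕ, k ≤ i ∧ i < j ∧ w = mval M φ i}))}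

lemma mval_until (M : TimedTrace A) (φ ψ : MF A) (N : ℕ∞) (k : ℕ) :
    mval M (MF.until_ (0, N) φ ψ) k = sSup (Uset M φ ψ N k) := rfl

lemma Uset_bddAbove (M : TimedTrace A) (φ ψ : MF A) (N : ℕ∞) (k : ℕ) :
    BddAbove (Uset M φ ψ N k) := by
  refine ⟨2, ?_⟩
  rintro v ⟨j, _, _, _, rfl⟩
  exact le_trans (min_le_left _ _) (mval_le_two M ψ j)

lemma Uset_sSup_le_two (M : TimedTrace A) (φ ψ : MF A) (N : ℕ∞) (k : ℕ) :
    sSup (Uset M φ ψ N k) ≤ 2 := by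
  refine csSup_le' ?_
  rintro v ⟨j, _, _, _, rfl⟩
  exact le_trans (min_le_left _ _) (mval_le_two M ψ j)

lemma psi_le_sSup_Uset (M : TimedTrace A) (φ ψ : MF A) (N : ℕ∞) (k : ℕ)
    (hk : (k : ℕ∞) < M.lam) : mval M ψ k ≤ sSup (Uset M φ ψ N k) := by
  refine le_csSup (Uset_bddAbove M φ ψ N k) ?_
  refine ⟨k, le_refl _, hk, ?_, ?_⟩
  · exact ⟨Nat.zero_le _, by simp [Nat.sub_self]⟩
  · have hempty : {w : ℕ | ∃ i : ℕ, k ≤ i ∧ i < k ∧ w = mval M φ i} = ∅ := by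
      ext w; simp only [Set.mem_setOf_eq, Set.mem_empty_iff_false, iff_false]
      rintro ⟨i, h1, h2, _⟩; omega
    rw [hempty]
    simp [csInf_singleton, min_eq_left (mval_le_two M ψ k)]

lemma inf_split (M : TimedTrace A) (φ : MF A) {k j : ℕ} (hkj : k < j) :
    sInf (insert 2 {w : ℕ | ∃ i : ℕ, k ≤ i ∧ i < j ∧ w = mval M φ i}) =
      min (mval M φ k)
        (sInf (insert 2 {w : ℕ | ∃ i : ℕ, k + 1 ≤ i ∧ i < j ∧ w = mval M φ i})) := by
  have hset : {w : ℕ | ∃ i, k ≤ i ∧ i < j ∧ w = mval M φ i} =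
      insert (mval M φ k) {w : ℕ | ∃ i, k + 1 ≤ i ∧ i < j ∧ w = mval M φ i} := by
    ext w
    simp only [Set.mem_setOf_eq, Set.mem_insert_iff]
    constructor
    · rintro ⟨i, h1, h2, rfl⟩
      rcases eq_or_lt_of_le h1 with h | h
      · left; rw [← h]
      · right; exact ⟨i, h, h2, rfl⟩
    · rintro (rfl | ⟨i, h1, h2, rfl⟩)
      · exact ⟨k, le_refl _, hkj, rfl⟩
      · exact ⟨i, by omega, h2, rfl⟩
  rw [hset, Set.insert_comm,
    csInf_insert (OrderBot.bddBelow _) ⟨2, Set.mem_insert _ _⟩]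

end Aux

/-- three-valued recursive identity for metric until over strict
traces; the max over `x ∈ [1,n]` is taken with `sSup` (empty sup `= 0`). -/
theorem mval_until_unfolding {A : Type} (M : TimedTrace A) (hstrict : M.strict)
    (k : ℕ) (hk : (k : ℕ∞) < M.lam) (n : ℕ) (φ ψ : MF A) :
    mval M (MF.until_ (0, (n : ℕ∞)) φ ψ) k =
      max (mval M ψ k) (min (mval M φ k)
        (sSup ((fun x : ℕ =>
          mval M (MF.next (x, (x : ℕ∞)) (MF.until_ (0, ((n - x : ℕ) : ℕ∞)) φ ψ)) k) ''
            Set.Icc 1 n))) := by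
  classical
  have hnext : ∀ x : ℕ,
      mval M (MF.next (x, (x : ℕ∞)) (MF.until_ (0, ((n - x : ℕ) : ℕ∞)) φ ψ)) k =
      if (((k + 1 : ℕ) : ℕ∞) < M.lam ∧ memI (x, (x : ℕ∞)) (M.tau (k + 1) - M.tau k)) then
        sSup (Uset M φ ψ ((n - x : ℕ) : ℕ∞) (k + 1)) else 0 := fun _ => rfl
  have memI_pt : ∀ x d : ℕ, memI (x, (x : ℕ∞)) d ↔ d = x := by
    intro x d
    simp only [memI]
    constructor
    · rintro ⟨h1, h2⟩
      have h2' : d ≤ x := by exact_mod_cast h2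
      omega
    · rintro rfl; exact ⟨le_refl _, le_refl _⟩
  rw [mval_until]
  set T : Set ℕ := (fun x : ℕ =>
      mval M (MF.next (x, (x : ℕ∞)) (MF.until_ (0, ((n - x : ℕ) : ℕ∞)) φ ψ)) k) ''
        Set.Icc 1 n with hT
  by_cases hcond : ((k + 1 : ℕ) : ℕ∞) < M.lam ∧ M.tau (k + 1) - M.tau k ≤ n
  · obtain ⟨hk1, hdn⟩ := hcond
    set d := M.tau (k + 1) - M.tau k with hd
    have hd1 : 1 ≤ d := by
      have := hstrict k hk1
      omega
    have htk : M.tau k ≤ M.tau (k + 1) := M.mono k hk1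
    -- compute sSup T
    have hTsup : sSup T = sSup (Uset M φ ψ ((n - d : ℕ) : ℕ∞) (k + 1)) := by
      apply le_antisymm
      · refine csSup_le' ?_
        rintro v ⟨x, hx, rfl⟩
        simp only [hnext]
        split_ifs with h
        · obtain ⟨-, h2⟩ := h
          obtain rfl : d = x := (memI_pt x d).mp h2
          exact le_refl _
        · exact Nat.zero_le _
      · have hmem : sSup (Uset M φ ψ ((n - d : ℕ) : ℕ∞) (k + 1)) ∈ T := by
          refine ⟨d, ⟨hd1, hdn⟩, ?_⟩
          simp only [hnext]
          rw [if_pos ⟨hk1, (memI_pt d d).mpr rfl⟩]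
        refine le_csSup ⟨2, ?_⟩ hmem
        rintro v ⟨x, hx, rfl⟩
        simp only [hnext]
        split_ifs
        · exact Uset_sSup_le_two M φ ψ _ _
        · omega
    rw [hTsup]
    apply le_antisymm
    · refine csSup_le' ?_
      rintro v ⟨j, hkj, hjlam, hmemj, rfl⟩
      rcases eq_or_lt_of_le hkj with rfl | hlt
      · exact le_max_of_le_left (min_le_left _ _)
      · have hk1j : k + 1 ≤ j := hlt
        have htkj : M.tau (k + 1) ≤ M.tau j := tau_mono_le M hk1j hjlam
        have hsub : M.tau j - M.tau k ≤ n := Nat.cast_le.mp hmemj.2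
        have hmemj' : memI (0, ((n - d : ℕ) : ℕ∞)) (M.tau j - M.tau (k + 1)) := by
          refine ⟨Nat.zero_le _, ?_⟩
          exact Nat.cast_le.mpr (by omega)
        have helem : min (mval M ψ j)
            (sInf (insert 2 {w : ℕ | ∃ i : ℕ, k + 1 ≤ i ∧ i < j ∧ w = mval M φ i})) ∈
            Uset M φ ψ ((n - d : ℕ) : ℕ∞) (k + 1) :=
          ⟨j, hk1j, hjlam, hmemj', rfl⟩
        have hle := le_csSup (Uset_bddAbove M φ ψ ((n - d : ℕ) : ℕ∞) (k + 1)) helem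
        rw [inf_split M φ hlt]
        refine le_max_of_le_right ?_
        omega
    · refine max_le (psi_le_sSup_Uset M φ ψ _ k hk) ?_
      rcases Set.eq_empty_or_nonempty (Uset M φ ψ ((n - d : ℕ) : ℕ∞) (k + 1)) with he | hne
      · rw [he]
        simp
      · have hmem := Nat.sSup_mem hne (Uset_bddAbove M φ ψ ((n - d : ℕ) : ℕ∞) (k + 1))
        obtain ⟨j, hk1j, hjlam, hmemj', hv⟩ := hmem
        have hlt : k < j := hk1j
        have htkj : M.tau (k + 1) ≤ M.tau j := tau_mono_le M hk1j hjlam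
        have hsub' : M.tau j - M.tau (k + 1) ≤ n - d := Nat.cast_le.mp hmemj'.2
        have hmemj : memI (0, (n : ℕ∞)) (M.tau j - M.tau k) := by
          refine ⟨Nat.zero_le _, ?_⟩
          exact Nat.cast_le.mpr (by omega)
        have helem : min (mval M ψ j)
            (sInf (insert 2 {w : ℕ | ∃ i : ℕ, k ≤ i ∧ i < j ∧ w = mval M φ i})) ∈
            Uset M φ ψ (n : ℕ∞) k := ⟨j, le_of_lt hlt, hjlam, hmemj, rfl⟩
        refine le_trans ?_ (le_csSup (Uset_bddAbove M φ ψ (n : ℕ∞) k) helem)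
        rw [inf_split M φ hlt, hv]
        omega
  · -- degenerate case: no reachable next step within the bound
    have hTzero : sSup T = 0 := by
      refine Nat.le_zero.mp (csSup_le' ?_)
      rintro v ⟨x, hx, rfl⟩
      simp only [hnext]
      split_ifs with h
      · exfalso
        obtain ⟨h1, h2⟩ := h
        obtain rfl : M.tau (k + 1) - M.tau k = x := (memI_pt x _).mp h2
        exact hcond ⟨h1, hx.2⟩
      · exact le_refl _
    rw [hTzero]
    simp only [Nat.min_zero, Nat.max_zero]
    apply le_antisymm
    · refine csSup_le' ?_
      rintro v ⟨j, hkj, hjlam, hmemj, rfl⟩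
      rcases eq_or_lt_of_le hkj with rfl | hlt
      · exact min_le_left _ _
      · exfalso
        have hk1j : k + 1 ≤ j := hlt
        have hk1lam : ((k + 1 : ℕ) : ℕ∞) < M.lam :=
          lt_of_le_of_lt (by exact_mod_cast hk1j) hjlam
        have htk : M.tau k ≤ M.tau (k + 1) := M.mono k hk1lam
        have htkj : M.tau (k + 1) ≤ M.tau j := tau_mono_le M hk1j hjlam
        have hsub : M.tau j - M.tau k ≤ n := Nat.cast_le.mp hmemj.2
        exact hcond ⟨hk1lam, by omega⟩
    · exact psi_le_sSup_Uset M φ ψ _ k hk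
end
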